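/- Let x₁, …, x_N be distinct real numbers and c > 0. The inverse multiquadric interpolation matrix A with entries A_{ij} = (c² + (x_i − x_j)²)^{−1/2} is positive definite, hence nonsingular. -/

import Mathlib

/-!
The inverse multiquadric is a Laplace transform in the squared distance,
`(c² + r)^(-1/2) = π^(-1/2) ∫₀^∞ t^(-1/2) e^(-c² t) e^(-r t) dt`,
so its quadratic form is an integral, against a positive weight, of quadratic forms of the
Gaussian kernels `e^(-t (x_i - x_j)²)`. These are strictly positive definite: after absorbing
`e^(-t x_i²)` into the coefficients `w_i`, expanding `e^(2t x_i x_j)` as a power series turns the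
quadratic form into `∑_k (2t)^k / k! (∑_i w_i x_i^k)²`, and some moment `∑_i w_i x_i^k` is
nonzero because the Vandermonde matrix of distinct nodes is invertible.
-/

open Real MeasureTheory Set Matrix Finset
open scoped Nat

lemma exists_sum_mul_pow_ne_zero {R : Type*} [CommRing R] [IsDomain R] {n : ℕ} {x w : Fin n → R}
    (hx : Function.Injective x) (hw : w ≠ 0) : ∃ k : ℕ, ∑ i, w i * x i ^ k ≠ 0 := by
  by_contra! h
  exact hw (eq_zero_of_forall_pow_sum_mul_pow_eq_zero hx fun k => h k)

lemma setIntegral_pos_of_pos_on {X : Type*} [MeasurableSpace X] {μ : Measure X} {s : Set X}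
    {f : X → ℝ} (hs : MeasurableSet s) (hμ : μ s ≠ 0) (hf : IntegrableOn f s μ)
    (hpos : ∀ x ∈ s, 0 < f x) : 0 < ∫ x in s, f x ∂μ := by
  rw [setIntegral_pos_iff_support_of_nonneg_ae
    ((ae_restrict_iff' hs).2 (ae_of_all _ fun x hx => (hpos x hx).le)) hf,
    show Function.support f ∩ s = s from inter_eq_right.2 fun x hx => (hpos x hx).ne']
  exact pos_iff_ne_zero.2 hμ

lemma inv_sqrt_eq_integral {r : ℝ} (hr : 0 < r) :
    (√r)⁻¹ = (√π)⁻¹ * ∫ t in Ioi (0 : ℝ), t ^ (-(1 / 2) : ℝ) * exp (-(r * t)) := by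
  have h := integral_rpow_mul_exp_neg_mul_Ioi (a := 1 / 2) (by norm_num) hr
  rw [show (1 / 2 : ℝ) - 1 = -(1 / 2) by norm_num, Gamma_one_half_eq] at h
  rw [h, ← sqrt_eq_rpow, one_div, sqrt_inv]
  have : √π ≠ 0 := by positivity
  field_simp

section
variable {n : ℕ} (x w : Fin n → ℝ)

lemma hasSum_sum_sum_mul_exp_mul (s : ℝ) :
    HasSum (fun k : ℕ => s ^ k / k ! * (∑ i, w i * x i ^ k) ^ 2)
      (∑ i, ∑ j, w i * w j * exp (s * x i * x j)) := by
  have h : ∀ i j, HasSum (fun k : ℕ => w i * w j * ((s * x i * x j) ^ k / k !))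
      (w i * w j * exp (s * x i * x j)) := fun i j => by
    rw [exp_eq_exp_ℝ]
    exact (NormedSpace.expSeries_div_hasSum_exp (s * x i * x j)).mul_left _
  convert hasSum_sum fun i _ => hasSum_sum fun j _ => h i j using 1
  funext k
  rw [sq, sum_mul_sum, mul_sum]
  refine sum_congr rfl fun i _ => ?_
  rw [mul_sum]
  refine sum_congr rfl fun j _ => ?_
  ring

variable {x w}

lemma sum_sum_mul_exp_mul_pos (hx : Function.Injective x) (hw : w ≠ 0) {s : ℝ} (hs : 0 < s) :
    0 < ∑ i, ∑ j, w i * w j * exp (s * x i * x j) := by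
  obtain ⟨k, hk⟩ := exists_sum_mul_pow_ne_zero hx hw
  refine hasSum_lt (f := 0) (i := k) (fun m => ?_) ?_ hasSum_zero
    (hasSum_sum_sum_mul_exp_mul x w s) <;> simp only [Pi.zero_apply] <;> positivity

lemma sum_sum_mul_exp_neg_sq_sub_mul_pos (hx : Function.Injective x) (hw : w ≠ 0) {t : ℝ}
    (ht : 0 < t) : 0 < ∑ i, ∑ j, w i * w j * exp (-((x i - x j) ^ 2 * t)) := by
  set u : Fin n → ℝ := fun i => w i * exp (-(x i ^ 2 * t))
  have hu : u ≠ 0 := fun h => hw <| funext fun i => by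
    simpa [u, exp_ne_zero] using congrFun h i
  have h : ∀ i j,
      w i * w j * exp (-((x i - x j) ^ 2 * t)) = u i * u j * exp (2 * t * x i * x j) := by
    intro i j
    have : exp (-((x i - x j) ^ 2 * t))
        = exp (-(x i ^ 2 * t)) * exp (-(x j ^ 2 * t)) * exp (2 * t * x i * x j) := by
      rw [← exp_add, ← exp_add]
      ring_nf
    rw [this]
    ring
  simpa only [h] using sum_sum_mul_exp_mul_pos hx hu (by positivity : 0 < 2 * t)

end

theorem posDef_of_eq_integral_exp_neg_mul {n : ℕ} {f g : ℝ → ℝ}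
    (hf : ∀ r, 0 ≤ r → f r = ∫ t in Ioi 0, g t * exp (-(r * t)))
    (hint : ∀ r, 0 ≤ r → IntegrableOn (fun t => g t * exp (-(r * t))) (Ioi 0))
    (hg : ∀ t ∈ Ioi (0 : ℝ), 0 < g t) {x : Fin n → ℝ} (hx : Function.Injective x) :
    (Matrix.of fun i j => f ((x i - x j) ^ 2)).PosDef := by
  refine PosDef.of_dotProduct_mulVec_pos ?_ fun v hv => ?_
  · ext i j
    simp only [conjTranspose_apply, of_apply, star_trivial]
    rw [← neg_sub (x i) (x j), neg_sq]
  set F : ℝ → Fin n → Fin n → ℝ :=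
    fun t i j => v i * v j * (g t * exp (-((x i - x j) ^ 2 * t)))
  have hF : ∀ i j, IntegrableOn (fun t => F t i j) (Ioi 0) := fun i j =>
    (hint _ (sq_nonneg _)).const_mul _
  have hquad : star v ⬝ᵥ (of fun i j => f ((x i - x j) ^ 2)) *ᵥ v
      = ∫ t in Ioi 0, ∑ i, ∑ j, F t i j := by
    rw [integral_finsetSum _ fun i _ => integrable_finsetSum _ fun j _ => hF i j]
    simp only [dotProduct, mulVec, of_apply, star_trivial, mul_sum]
    refine sum_congr rfl fun i _ => ?_
    rw [integral_finsetSum _ fun j _ => hF i j]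
    refine sum_congr rfl fun j _ => ?_
    rw [integral_const_mul, hf _ (sq_nonneg _)]
    ring
  rw [hquad]
  refine setIntegral_pos_of_pos_on measurableSet_Ioi (by simp)
    (integrable_finsetSum _ fun i _ => integrable_finsetSum _ fun j _ => hF i j) fun t ht => ?_
  have hfactor :
      ∑ i, ∑ j, F t i j = g t * ∑ i, ∑ j, v i * v j * exp (-((x i - x j) ^ 2 * t)) := by
    simp only [F, mul_sum]
    refine sum_congr rfl fun i _ => sum_congr rfl fun j _ => ?_
    ring
  rw [hfactor]
  exact mul_pos (hg t ht) (sum_sum_mul_exp_neg_sq_sub_mul_pos hx hv ht)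

theorem imq_interp_matrix_posdef_general (N : ℕ)
    (x : Fin N → ℝ) (hx : Function.Injective x) (c : ℝ) (hc : 0 < c) :
    (Matrix.of fun i j => (Real.sqrt (c ^ 2 + (x i - x j) ^ 2))⁻¹).PosDef ∧
    IsUnit (Matrix.of fun i j => (Real.sqrt (c ^ 2 + (x i - x j) ^ 2))⁻¹).det := by
  set g : ℝ → ℝ := fun t => (√π)⁻¹ * (t ^ (-(1 / 2) : ℝ) * exp (-(c ^ 2 * t)))
  have hg_mul_exp : ∀ r t,
      g t * exp (-(r * t)) = (√π)⁻¹ * (t ^ (-(1 / 2) : ℝ) * exp (-((c ^ 2 + r) * t))) := by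
    intro r t
    rw [add_mul, neg_add, exp_add]
    ring
  have hpd : (Matrix.of fun i j => (√(c ^ 2 + (x i - x j) ^ 2))⁻¹).PosDef := by
    refine posDef_of_eq_integral_exp_neg_mul (f := fun r => (√(c ^ 2 + r))⁻¹) (g := g)
      (fun r hr => ?_) (fun r hr => ?_) (fun t (ht : 0 < t) => by positivity) hx
    · simp only [hg_mul_exp, integral_const_mul]
      exact inv_sqrt_eq_integral (by positivity)
    · have h := integrableOn_rpow_mul_exp_neg_mul_rpow (s := -(1 / 2)) (by norm_num) one_pos
        (by positivity : 0 < c ^ 2 + r)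
      simp only [rpow_one, neg_mul] at h
      simp only [hg_mul_exp]
      exact h.const_mul _
  exact ⟨hpd, isUnit_iff_ne_zero.2 hpd.det_pos.ne'⟩

theorem imq_interp_matrix_posdef (N : ℕ) (hN : 1 ≤ N)
    (x : Fin N → ℝ) (hx : Function.Injective x) (c : ℝ) (hc : 0 < c) :
    (Matrix.of fun i j => (Real.sqrt (c ^ 2 + (x i - x j) ^ 2))⁻¹).PosDef ∧
    IsUnit (Matrix.of fun i j => (Real.sqrt (c ^ 2 + (x i - x j) ^ 2))⁻¹).det :=
  imq_interp_matrix_posdef_general N x hx c hc
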